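/- Let F_q be a finite field with q elements, let 0 ≤ k < n, and let V be an F_q-vector space of dimension at least 2n − k. Let W_1, W_2 be n-dimensional subspaces of V with dim(W_1 ∩ W_2) = k, and set Z = W_1 ∩ W_2. Then the number of simple linear maps T : W_1 → V with image T(W_1) = W_2 equals (the number of simple linear maps S : Z → W_2, where Z is viewed as a k-dimensional subspace of the n-dimensional space W_2) multiplied by ∏_{i=k}^{n−1} (q^n − q^i). -/

import Mathlib

/-- A linear map `T : W → V` defined on a subspace `W` of `V` is *simple* if the only
`T`-invariant subspace properly contained in `V` is the zero subspace. A subspace `U` of `V`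
is `T`-invariant if `U ⊆ W` and `T(U) ⊆ U`. -/
def IsSimple {F V : Type*} [Field F] [AddCommGroup V] [Module F V]
    (W : Submodule F V) (T : W →ₗ[F] V) : Prop :=
  ∀ U : Submodule F V, U ≤ W → (∀ x : W, (x : V) ∈ U → T x ∈ U) → U ≠ ⊤ → U = ⊥

/-!
A linear map `T : W₁ → V` with image `W₂` is injective, as `dim W₁ = dim W₂`. If `U ≠ 0` is
`T`-invariant, then `U ∩ W₂ ⊇ T(U) ≠ 0` is again invariant and lies in `Z = W₁ ∩ W₂`; hence `T`
is simple exactly when its restriction `S : Z → W₂` is. So the maps `T` are fibred over the simple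
`S`, and the fibre over `S` consists of the injective extensions `W₁ → W₂` of `S` (a simple map on
the proper subspace `Z` is injective, its kernel being invariant). Writing `W₁ = Z ⊕ C`, these
correspond to the maps `C → W₂` that stay injective modulo `S(Z)`, and there are
`∏_{i < n-k} (q^(n-k) - q^i) · q^(k(n-k)) = ∏_{k ≤ i < n} (q^n - q^i)` of them.
-/

open Module Submodule LinearMap Function Finset

theorem card_subtype_eq_card_mul_of_card_fibers {X Y : Type*} [Finite X] [Finite Y] (φ : X → Y)
    {p : X → Prop} {s : Y → Prop} {c : ℕ}
    (hc : ∀ y, s y → Nat.card {x // p x ∧ φ x = y} = c) :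
    Nat.card {x // p x ∧ s (φ x)} = Nat.card {y // s y} * c := by
  have : Fintype {y // s y} := Fintype.ofFinite _
  let e : {x // p x ∧ s (φ x)} ≃ Σ y : {y // s y}, {x // p x ∧ φ x = y} :=
    { toFun := fun x => ⟨⟨φ x, x.2.2⟩, x.1, x.2.1, rfl⟩
      invFun := fun y => ⟨y.2.1, y.2.2.1, (congrArg s y.2.2.2).mpr y.1.2⟩
      left_inv := fun _ => rfl
      right_inv := fun ⟨_, _, _, hxy⟩ => Sigma.subtype_ext (Subtype.ext hxy) rfl }
  rw [Nat.card_congr e, Nat.card_sigma, sum_congr rfl fun y _ => hc y.1 y.2, sum_const, card_univ,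
    smul_eq_mul, Nat.card_eq_fintype_card]

theorem prod_range_pow_sub_pow_mul_pow (q : ℕ) {k m d : ℕ} (hkd : k ≤ d) :
    (∏ i ∈ range (m - k), (q ^ (d - k) - q ^ i)) * q ^ ((m - k) * k) =
      ∏ i ∈ Ico k m, (q ^ d - q ^ i) := by
  have hpow : q ^ ((m - k) * k) = ∏ _i ∈ range (m - k), q ^ k := by
    rw [prod_const, card_range, mul_comm, pow_mul]
  rw [hpow, ← prod_mul_distrib, prod_Ico_eq_prod_range]
  refine prod_congr rfl fun i _ => ?_
  rw [Nat.sub_mul, ← pow_add, ← pow_add, Nat.sub_add_cancel hkd, add_comm]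

section Counting

variable {F M N C : Type*} [Field F] [AddCommGroup M] [Module F M] [AddCommGroup N] [Module F N]
  [AddCommGroup C] [Module F C]

theorem card_range_eq_eq_card_surjective (W : Submodule F N) (p : (M →ₗ[F] N) → Prop) :
    Nat.card {T : M →ₗ[F] N // p T ∧ range T = W} =
      Nat.card {g : M →ₗ[F] W // p (W.subtype ∘ₗ g) ∧ Surjective g} :=
  Nat.card_congr
    { toFun := fun T => ⟨T.1.codRestrict W fun x => T.2.2.le (mem_range_self _ x), T.2.1, by
        rw [← range_eq_top, range_codRestrict, T.2.2, comap_subtype_self]⟩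
      invFun := fun g => ⟨W.subtype ∘ₗ g, g.2.1, by
        rw [range_comp, range_eq_top.mpr g.2.2, map_subtype_top]⟩
      left_inv := fun _ => rfl
      right_inv := fun _ => rfl }

theorem card_injective_linearMap [Fintype F] [FiniteDimensional F M] [FiniteDimensional F N]
    (h : finrank F M ≤ finrank F N) :
    Nat.card {g : M →ₗ[F] N // Injective g} =
      ∏ i ∈ range (finrank F M), (Fintype.card F ^ finrank F N - Fintype.card F ^ i) := by
  have : Finite N := Module.finite_of_finite F
  let b := Module.finBasis F M
  let e : {s : Fin (finrank F M) → N // LinearIndependent F s} ≃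
      {g : M →ₗ[F] N // Injective g} :=
    (b.constr F : (Fin (finrank F M) → N) ≃ₗ[F] M →ₗ[F] N).toEquiv.subtypeEquiv fun s =>
      ⟨b.injective_constr_of_linearIndependent (R₂ := F), fun hs => by
        simpa [comp_def] using b.linearIndependent.map' _ (ker_eq_bot.mpr hs)⟩
  rw [← Nat.card_congr e, card_linearIndependent h,
    Fin.prod_univ_eq_prod_range fun i => Fintype.card F ^ finrank F N - Fintype.card F ^ i]

theorem card_injective_mkQ_comp (R : Submodule F N) :
    Nat.card {h : C →ₗ[F] N // Injective (R.mkQ ∘ₗ h)} =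
      Nat.card {g : C →ₗ[F] N ⧸ R // Injective g} * Nat.card (C →ₗ[F] R) := by
  obtain ⟨D, hRD⟩ := R.exists_isCompl
  let e : N ≃ₗ[F] (N ⧸ R) × R :=
    equivProdOfSurjectiveOfIsCompl R.mkQ (R.projectionOnto D hRD) R.range_mkQ
      (range_projectionOnto hRD) (by rwa [ker_mkQ, ker_projectionOnto])
  let Φ : (C →ₗ[F] N) ≃ (C →ₗ[F] N ⧸ R) × (C →ₗ[F] R) :=
    ((LinearEquiv.congrRight e).trans (LinearMap.prodEquiv (S := F)).symm).toEquiv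
  rw [← Nat.card_prod, ← Nat.card_congr Equiv.prodSubtypeFstEquivSubtypeProd]
  exact Nat.card_congr (Φ.subtypeEquiv fun h => Iff.rfl)

theorem injective_coprod_iff {P : Type*} [AddCommGroup P] [Module F P] {f : P →ₗ[F] N}
    (hf : Injective f) (h : C →ₗ[F] N) :
    Injective (f.coprod h) ↔ Injective ((range f).mkQ ∘ₗ h) := by
  simp only [injective_iff_map_eq_zero]
  constructor
  · intro H c hc
    obtain ⟨p, hp⟩ : h c ∈ range f := (Submodule.Quotient.mk_eq_zero _).mp hc
    simpa using congrArg Prod.snd (H (-p, c) (by simp [hp]))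
  · rintro H ⟨p, c⟩ hpc
    have hc : c = 0 := H c <| (Submodule.Quotient.mk_eq_zero _).mpr
      ⟨-p, by rw [map_neg]; exact neg_eq_of_add_eq_zero_right hpc⟩
    subst hc
    simpa using hf (by simpa using hpc : f p = f 0)

theorem card_injective_extension_eq_card_injective_mkQ_comp {P Q : Submodule F M}
    (hPQ : IsCompl P Q) {f : P →ₗ[F] N} (hf : Injective f) :
    Nat.card {g : M →ₗ[F] N // Injective g ∧ g ∘ₗ P.subtype = f} =
      Nat.card {h : Q →ₗ[F] N // Injective ((range f).mkQ ∘ₗ h)} := by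
  have hinj : ∀ h : Q →ₗ[F] N, Injective (ofIsCompl hPQ f h) ↔ Injective ((range f).mkQ ∘ₗ h) :=
    fun h => by
      rw [ofIsCompl, coe_comp, LinearEquiv.coe_coe, EquivLike.injective_comp,
        injective_coprod_iff hf]
  exact Nat.card_congr
    { toFun := fun g => ⟨g.1 ∘ₗ Q.subtype, (hinj _).mp <| by
        rw [ofIsCompl_eq' hPQ g.2.2.symm rfl]; exact g.2.1⟩
      invFun := fun h => ⟨ofIsCompl hPQ f h, (hinj h).mpr h.2, by ext; simp⟩
      left_inv := fun g => Subtype.ext (ofIsCompl_eq' hPQ g.2.2.symm rfl)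
      right_inv := fun h => Subtype.ext (by ext; simp) }

theorem card_injective_extension [Fintype F] [FiniteDimensional F M] [FiniteDimensional F N]
    (hMN : finrank F M ≤ finrank F N) {P : Type*} [AddCommGroup P] [Module F P]
    {ι : P →ₗ[F] M} (hι : Injective ι) {f : P →ₗ[F] N} (hf : Injective f) :
    Nat.card {g : M →ₗ[F] N // Injective g ∧ g ∘ₗ ι = f} =
      ∏ i ∈ Ico (finrank F P) (finrank F M),
        (Fintype.card F ^ finrank F N - Fintype.card F ^ i) := by
  obtain ⟨Q, hQ⟩ := (range ι).exists_isCompl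
  let e := LinearEquiv.ofInjective ι hι
  have hι_eq : ι = (range ι).subtype ∘ₗ e := rfl
  have hfe : Injective (f ∘ₗ e.symm.toLinearMap) := by
    rw [coe_comp, LinearEquiv.coe_coe, EquivLike.injective_comp]; exact hf
  have hQ_rank : finrank F Q = finrank F M - finrank F P := by
    have := finrank_add_eq_of_isCompl hQ
    rw [← e.finrank_eq] at this
    omega
  have hR_rank : finrank F (range (f ∘ₗ e.symm.toLinearMap)) = finrank F P := by
    rw [finrank_range_of_inj hfe, e.finrank_eq]
  have hP_le : finrank F P ≤ finrank F N := by
    rw [← hR_rank]; exact Submodule.finrank_le _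
  have hquot_rank :
      finrank F (N ⧸ range (f ∘ₗ e.symm.toLinearMap)) = finrank F N - finrank F P := by
    have := (range (f ∘ₗ e.symm.toLinearMap)).finrank_quotient_add_finrank
    omega
  rw [Nat.card_congr (Equiv.subtypeEquivRight fun g => and_congr_right' <| by
      rw [hι_eq, ← LinearMap.comp_assoc, ← LinearEquiv.eq_comp_toLinearMap_symm]),
    card_injective_extension_eq_card_injective_mkQ_comp hQ hfe, card_injective_mkQ_comp,
    card_injective_linearMap (by omega), natCard_eq_pow_finrank (K := F) (V := Q →ₗ[F] _),
    Nat.card_eq_fintype_card, finrank_linearMap, hQ_rank, hquot_rank, hR_rank,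
    prod_range_pow_sub_pow_mul_pow _ hP_le]

end Counting

section IsSimple

variable {F V : Type*} [Field F] [AddCommGroup V] [Module F V]

theorem isSimple_iff_forall_eq_bot {W : Submodule F V} (hW : W ≠ ⊤) (T : W →ₗ[F] V) :
    IsSimple W T ↔ ∀ U ≤ W, (∀ x : W, (x : V) ∈ U → T x ∈ U) → U = ⊥ :=
  ⟨fun h U hU hT => h U hU hT (ne_top_of_le_ne_top hW hU), fun h U hU hT _ => h U hU hT⟩

theorem IsSimple.injective {W : Submodule F V} (hW : W ≠ ⊤) {T : W →ₗ[F] V}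
    (hT : IsSimple W T) : Injective T := by
  have hker := (isSimple_iff_forall_eq_bot hW T).mp hT ((ker T).map W.subtype)
    (map_subtype_le _ _) fun x hx => by
      obtain ⟨y, hy, hyx⟩ := hx
      rw [← Subtype.ext hyx, mem_ker.mp hy]
      exact zero_mem _
  rw [← ker_eq_bot]
  exact map_injective_of_injective W.injective_subtype (hker.trans (Submodule.map_bot _).symm)

def interInclusion (W₁ W₂ : Submodule F V) : (W₁ ⊓ W₂).comap W₂.subtype →ₗ[F] W₁ :=
  (W₂.subtype ∘ₗ ((W₁ ⊓ W₂).comap W₂.subtype).subtype).codRestrict W₁ fun z => z.2.1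

theorem interInclusion_injective (W₁ W₂ : Submodule F V) : Injective (interInclusion W₁ W₂) :=
  (injective_codRestrict_iff _).mpr <| W₂.injective_subtype.comp (Submodule.injective_subtype _)

theorem isSimple_subtype_comp_iff {W₁ W₂ : Submodule F V} (hW : ¬W₂ ≤ W₁) {g : W₁ →ₗ[F] W₂}
    (hg : Injective g) :
    IsSimple W₁ (W₂.subtype ∘ₗ g) ↔
      IsSimple ((W₁ ⊓ W₂).comap W₂.subtype) (g ∘ₗ interInclusion W₁ W₂) := by
  rw [isSimple_iff_forall_eq_bot (W := W₁) fun h => hW (h ▸ le_top),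
    isSimple_iff_forall_eq_bot (by simpa [comap_subtype_eq_top] using hW)]
  constructor
  · intro hT U hU hinv
    have hU₁ : U.map W₂.subtype ≤ W₁ := by
      rintro _ ⟨u, hu, rfl⟩
      exact (hU hu).1
    refine map_injective_of_injective W₂.injective_subtype
      ((hT _ hU₁ fun x hx => ?_).trans (Submodule.map_bot _).symm)
    obtain ⟨u, hu, hux⟩ := hx
    rw [show x = interInclusion W₁ W₂ ⟨u, hU hu⟩ from Subtype.ext hux.symm]
    exact ⟨_, hinv ⟨u, hU hu⟩ hu, rfl⟩
  · intro hS U hU hinv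
    have hU' : U.comap W₂.subtype ≤ (W₁ ⊓ W₂).comap W₂.subtype := fun u hu => ⟨hU hu, u.2⟩
    have hbot := hS _ hU' fun z hz => hinv (interInclusion W₁ W₂ z) hz
    refine eq_bot_iff.mpr fun x hx => ?_
    have hgx : g ⟨x, hU hx⟩ ∈ U.comap W₂.subtype := hinv ⟨x, hU hx⟩ hx
    rw [hbot, mem_bot, ← g.map_zero] at hgx
    simpa using congrArg Subtype.val (hg hgx)

end IsSimple

theorem card_simple_maps_with_fixed_image_eq_card_simple_maps_on_intersection_mul_general
    {F V : Type*} [Field F] [Fintype F]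
    [AddCommGroup V] [Module F V]
    (q n k : ℕ) (hq : Fintype.card F = q) (hkn : k < n)
    (W₁ W₂ : Submodule F V)
    (h1 : Module.finrank F W₁ = n) (h2 : Module.finrank F W₂ = n)
    (hZ : Module.finrank F ↥(W₁ ⊓ W₂) = k) :
    Nat.card {T : W₁ →ₗ[F] V // IsSimple W₁ T ∧ LinearMap.range T = W₂} =
      Nat.card {S : ↥((W₁ ⊓ W₂).comap W₂.subtype) →ₗ[F] W₂ //
          IsSimple ((W₁ ⊓ W₂).comap W₂.subtype) S} *
        ∏ i ∈ Finset.Ico k n, (q ^ n - q ^ i) := by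
  subst hq
  have : FiniteDimensional F W₁ := Module.finite_of_finrank_pos (by omega)
  have : FiniteDimensional F W₂ := Module.finite_of_finrank_pos (by omega)
  have hW : ¬W₂ ≤ W₁ := fun h => by rw [inf_eq_right.mpr h] at hZ; omega
  have hZ' : finrank F ((W₁ ⊓ W₂).comap W₂.subtype) = k :=
    (comapSubtypeEquivOfLe inf_le_right).finrank_eq.trans hZ
  have hZ'_ne_top : (W₁ ⊓ W₂).comap W₂.subtype ≠ ⊤ := by
    simpa [comap_subtype_eq_top] using hW
  have : Finite (W₁ →ₗ[F] W₂) := Module.finite_of_finite F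
  have : Finite ((W₁ ⊓ W₂).comap W₂.subtype →ₗ[F] W₂) := Module.finite_of_finite F
  have hsimple : ∀ g : W₁ →ₗ[F] W₂, IsSimple W₁ (W₂.subtype ∘ₗ g) ∧ Surjective g ↔
      Injective g ∧ IsSimple ((W₁ ⊓ W₂).comap W₂.subtype) (g ∘ₗ interInclusion W₁ W₂) :=
    fun g => by
      rw [← injective_iff_surjective_of_finrank_eq_finrank (h1.trans h2.symm), and_comm]
      exact and_congr_right (isSimple_subtype_comp_iff hW)
  rw [card_range_eq_eq_card_surjective, Nat.card_congr (Equiv.subtypeEquivRight hsimple),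
    card_subtype_eq_card_mul_of_card_fibers (· ∘ₗ interInclusion W₁ W₂) fun S hS => ?_]
  rw [card_injective_extension (by omega) (interInclusion_injective W₁ W₂)
    (hS.injective hZ'_ne_top), hZ', h1, h2]

theorem card_simple_maps_with_fixed_image_eq_card_simple_maps_on_intersection_mul
    {F V : Type*} [Field F] [Fintype F]
    [AddCommGroup V] [Module F V] [FiniteDimensional F V]
    (q n k : ℕ) (hq : Fintype.card F = q) (hkn : k < n)
    (hV : 2 * n - k ≤ Module.finrank F V)
    (W₁ W₂ : Submodule F V)
    (h1 : Module.finrank F W₁ = n) (h2 : Module.finrank F W₂ = n)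
    (hZ : Module.finrank F ↥(W₁ ⊓ W₂) = k) :
    Nat.card {T : W₁ →ₗ[F] V // IsSimple W₁ T ∧ LinearMap.range T = W₂} =
      Nat.card {S : ↥((W₁ ⊓ W₂).comap W₂.subtype) →ₗ[F] W₂ //
          IsSimple ((W₁ ⊓ W₂).comap W₂.subtype) S} *
        ∏ i ∈ Finset.Ico k n, (q ^ n - q ^ i) :=
  card_simple_maps_with_fixed_image_eq_card_simple_maps_on_intersection_mul_general q n k hq hkn W₁
    W₂ h1 h2 hZ
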